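/- arXiv:2012.13558 — 2 statements merged into one kernel-verified Lean document; each statement's English description precedes it below -/
import Mathlib

section
/- Let G be a simple graph without isolated vertices, let γ : V(G) → {1,…,n} be any function, and let d ≥ 0 be an integer. Then γ is a proper n-coloring of Γ_{2d+1} G if and only if for every color i ∈ {1,…,n}, the set N^{=d}(γ^{-1}(i)) is an independent set in G. -/
/-- `HasWalkLen G d u v` means there is a walk of length exactly `d` from `u` to `v` in `G`. -/
def HasWalkLen {V : Type*} (G : SimpleGraph V) (d : ℕ) (u v : V) : Prop :=
  ∃ w : G.Walk u v, w.length = d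

/-- `γ` is a proper coloring of the `d`-th power graph `Γ_d G`: any two (not necessarily
distinct) vertices joined by a walk of length exactly `d` receive different colors. -/
def IsWideColoring {V : Type*} (G : SimpleGraph V) (d : ℕ) {m : ℕ} (γ : V → Fin m) : Prop :=
  ∀ u v : V, HasWalkLen G d u v → γ u ≠ γ v

/-- `N^{=d}(S)`: vertices reachable from `S` by a walk of length exactly `d`. -/
def NExact {V : Type*} (G : SimpleGraph V) (d : ℕ) (S : Set V) : Set V :=
  {v | ∃ s ∈ S, HasWalkLen G d s v}

/-- `N^{≤d}(S)`: vertices reachable from `S` by a walk of length at most `d`. -/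
def NLe {V : Type*} (G : SimpleGraph V) (d : ℕ) (S : Set V) : Set V :=
  {v | ∃ s ∈ S, ∃ w : G.Walk s v, w.length ≤ d}

/-- The exponential graph `K_c^G`: vertices are functions `V(G) → {1,…,c}`, distinct
functions `f, g` adjacent iff `f u ≠ g v` for every edge `uv` of `G`. -/
def expGraph {V : Type*} (c : ℕ) (G : SimpleGraph V) : SimpleGraph (V → Fin c) where
  Adj f g := f ≠ g ∧ ∀ u v : V, G.Adj u v → f u ≠ g v
  symm := by
    constructor
    rintro f g ⟨hne, h⟩
    exact ⟨hne.symm, fun u v huv he => h v u huv.symm he.symm⟩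
  loopless := ⟨fun f h => h.1 rfl⟩

/-- The tensor (categorical) product `G × H`. -/
def tensorProd {V W : Type*} (G : SimpleGraph V) (H : SimpleGraph W) :
    SimpleGraph (V × W) where
  Adj p q := G.Adj p.1 q.1 ∧ H.Adj p.2 q.2
  symm := ⟨fun p q h => ⟨h.1.symm, h.2.symm⟩⟩
  loopless := ⟨fun p h => G.loopless.irrefl _ h.1⟩

/-- The lexicographic product `G[H]`. -/
def lexProd {V W : Type*} (G : SimpleGraph V) (H : SimpleGraph W) :
    SimpleGraph (V × W) where
  Adj p q := G.Adj p.1 q.1 ∨ (p.1 = q.1 ∧ H.Adj p.2 q.2)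
  symm := by
    constructor
    rintro p q (h | ⟨e, h⟩)
    · exact Or.inl h.symm
    · exact Or.inr ⟨e.symm, h.symm⟩
  loopless := by
    constructor
    rintro p (h | ⟨-, h⟩)
    · exact G.loopless.irrefl _ h
    · exact H.loopless.irrefl _ h

/-- Vertices of `Ω_{2d+1} K_n`: tuples in `{0,…,d+1}^n` with exactly one coordinate equal
to `0` and at least one coordinate equal to `1`. -/
def OmegaVert (d n : ℕ) : Type :=
  {x : Fin n → Fin (d + 2) // (∃! i, x i = 0) ∧ ∃ i, x i = 1}

/-- The graph `Ω_{2d+1} K_n`: two tuples adjacent iff in every coordinate they differ by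
exactly one, or are both equal to `d+1`. -/
def omegaK (d n : ℕ) : SimpleGraph (OmegaVert d n) where
  Adj a b := ∀ i, ((a.1 i : ℕ) + 1 = (b.1 i : ℕ) ∨ (b.1 i : ℕ) + 1 = (a.1 i : ℕ))
      ∨ ((a.1 i : ℕ) = d + 1 ∧ (b.1 i : ℕ) = d + 1)
  symm := by
    constructor
    intro a b h i
    rcases h i with (h | h) | h
    · exact Or.inl (Or.inr h)
    · exact Or.inl (Or.inl h)
    · exact Or.inr ⟨h.2, h.1⟩
  loopless := by
    constructor
    intro a h
    obtain ⟨i, hi, -⟩ := a.2.1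
    have hv : (a.1 i : ℕ) = 0 := by simp [hi]
    rcases h i with (h | h) | ⟨h1, h2⟩ <;> omega

/-! A walk of length `2d + 1` from `u` to `v` is exactly a walk of length `d` from `u`, a middle
edge `xy`, and a walk of length `d` from `y` to `v`. So a monochromatic pair `u, v` joined by
such a walk is the same thing as an edge `xy` with `x, y` in `N^{=d}` of one color class. -/

namespace HasWalkLen

variable {V : Type*} {G : SimpleGraph V}

theorem symm {d : ℕ} {u v : V} (h : HasWalkLen G d u v) : HasWalkLen G d v u :=
  let ⟨w, hw⟩ := h
  ⟨w.reverse, by rw [SimpleGraph.Walk.length_reverse, hw]⟩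

theorem add_one_add_iff {a b : ℕ} {u v : V} :
    HasWalkLen G (a + 1 + b) u v ↔
      ∃ x y, HasWalkLen G a u x ∧ G.Adj x y ∧ HasWalkLen G b y v := by
  constructor
  · rintro ⟨w, hw⟩
    refine ⟨w.getVert a, w.getVert (a + 1), ⟨w.take a, ?_⟩,
      w.adj_getVert_succ (by omega), ⟨w.drop (a + 1), ?_⟩⟩
    · rw [SimpleGraph.Walk.take_length]; omega
    · rw [SimpleGraph.Walk.drop_length]; omega
  · rintro ⟨x, y, ⟨p, hp⟩, hxy, ⟨q, hq⟩⟩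
    refine ⟨p.append (.cons hxy q), ?_⟩
    rw [SimpleGraph.Walk.length_append, SimpleGraph.Walk.length_cons, hp, hq]
    omega

end HasWalkLen

theorem stmt_9_general {V : Type} (G : SimpleGraph V)
    (n d : ℕ) (γ : V → Fin n) :
    IsWideColoring G (2 * d + 1) γ ↔
      ∀ i : Fin n, ∀ u ∈ NExact G d (γ ⁻¹' {i}), ∀ v ∈ NExact G d (γ ⁻¹' {i}),
        ¬ G.Adj u v := by
  rw [IsWideColoring, show 2 * d + 1 = d + 1 + d by omega]
  constructor
  · rintro h i x ⟨u, hu, hux⟩ y ⟨v, hv, hvy⟩ hxy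
    exact h u v (HasWalkLen.add_one_add_iff.2 ⟨x, y, hux, hxy, hvy.symm⟩) (hu.trans hv.symm)
  · rintro h u v huv hγ
    obtain ⟨x, y, hux, hxy, hyv⟩ := HasWalkLen.add_one_add_iff.1 huv
    exact h (γ u) x ⟨u, rfl, hux⟩ y ⟨v, hγ.symm, hyv.symm⟩ hxy

/-- for a graph `G` without isolated vertices, `γ` is a proper `n`-coloring
of `Γ_{2d+1} G` iff every color class `S` has `N^{=d}(S)` independent in `G`. -/
theorem stmt_9 {V : Type} (G : SimpleGraph V) (hG : ∀ v : V, ∃ u, G.Adj v u)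
    (n d : ℕ) (γ : V → Fin n) :
    IsWideColoring G (2 * d + 1) γ ↔
      ∀ i : Fin n, ∀ u ∈ NExact G d (γ ⁻¹' {i}), ∀ v ∈ NExact G d (γ ⁻¹' {i}),
        ¬ G.Adj u v :=
  stmt_9_general G n d γ
end

section
/- Let G be a simple graph, A ⊆ V(G), d ≥ 0 and c ≥ 1 integers, and let i, j, i', j' ∈ {1,…,c} satisfy i ≠ i', j ≠ j', and i ≠ j'. Define h : V(G) → {1,…,c} by h(v) = j if v ∈ N^{=d}(A) and h(v) = i otherwise, and define h' : V(G) → {1,…,c} by h'(v) = j' if v ∈ N^{=d+1}(A) and h'(v) = i' otherwise. Then for every edge vv' of G, h(v) ≠ h'(v') and h(v') ≠ h'(v); i.e., h and h' are adjacent vertices of the exponential graph K_c^G. -/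
theorem mem_nExact_succ_of_adj {V : Type*} {G : SimpleGraph V} {S : Set V} {d : ℕ} {u v : V}
    (huv : G.Adj u v) (hu : u ∈ NExact G d S) : v ∈ NExact G (d + 1) S := by
  obtain ⟨s, hs, w, rfl⟩ := hu
  exact ⟨s, hs, w.concat huv, w.length_concat huv⟩

theorem stmt_19_general {V : Type} (G : SimpleGraph V) (A : Set V) (d c : ℕ)
    (i j i' j' : Fin c) (hii' : i ≠ i') (hjj' : j ≠ j') (hij' : i ≠ j')
    (h h' : V → Fin c)
    (hh : ∀ v : V, (v ∈ NExact G d A → h v = j) ∧ (v ∉ NExact G d A → h v = i))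
    (hh' : ∀ v : V, (v ∈ NExact G (d + 1) A → h' v = j') ∧
      (v ∉ NExact G (d + 1) A → h' v = i')) :
    ∀ v v' : V, G.Adj v v' → h v ≠ h' v' ∧ h v' ≠ h' v := by
  have hne : ∀ v v' : V, G.Adj v v' → h v ≠ h' v' := by
    intro v v' hvv'
    by_cases hv : v ∈ NExact G d A
    · rw [(hh v).1 hv, (hh' v').1 (mem_nExact_succ_of_adj hvv' hv)]
      exact hjj'
    rw [(hh v).2 hv]
    by_cases hv' : v' ∈ NExact G (d + 1) A
    · rw [(hh' v').1 hv']
      exact hij'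
    · rw [(hh' v').2 hv']
      exact hii'
  exact fun v v' hvv' => ⟨hne v v' hvv', hne v' v hvv'.symm⟩

/-- the almost-constant functions `h` (equal to `j` on `N^{=d}(A)` and `i`
elsewhere) and `h'` (equal to `j'` on `N^{=d+1}(A)` and `i'` elsewhere) satisfy
`h v ≠ h' v'` for every edge `vv'` of `G` (in both orientations), i.e. they are adjacent
in the exponential graph `K_c^G`, provided `i ≠ i'`, `j ≠ j'` and `i ≠ j'`. -/
theorem stmt_19 {V : Type} (G : SimpleGraph V) (A : Set V) (d c : ℕ) (hc : 1 ≤ c)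
    (i j i' j' : Fin c) (hii' : i ≠ i') (hjj' : j ≠ j') (hij' : i ≠ j')
    (h h' : V → Fin c)
    (hh : ∀ v : V, (v ∈ NExact G d A → h v = j) ∧ (v ∉ NExact G d A → h v = i))
    (hh' : ∀ v : V, (v ∈ NExact G (d + 1) A → h' v = j') ∧
      (v ∉ NExact G (d + 1) A → h' v = i')) :
    ∀ v v' : V, G.Adj v v' → h v ≠ h' v' ∧ h v' ≠ h' v :=
  stmt_19_general G A d c i j i' j' hii' hjj' hij' h h' hh hh'
end
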